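/- Let A be a Hermitian n×n complex matrix, let B be any n×n complex matrix, and let t be a real number. Then ‖[exp(itA), B]‖ ≤ |t| · ‖[A, B]‖, where [X,Y] = XY − YX and the norm is the operator norm. -/

import Mathlib

/-!
The path `s ↦ exp(isA) B exp(i(t-s)A)` runs from `B exp(itA)` at `s = 0` to `exp(itA) B` at
`s = t`. Its derivative `exp(isA) (i[A,B]) exp(i(t-s)A)` has norm `‖[A,B]‖`, the outer factors
being unitary, so the mean value inequality gives the bound. This holds in any C⋆-algebra; complex
matrices with the `ℓ²` operator norm are one.
-/

open scoped Matrix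

/-- The `ℓ²` operator norm of a complex matrix, i.e. the norm of the associated
operator on Euclidean space. -/
noncomputable def opNorm {n : ℕ} (A : Matrix (Fin n) (Fin n) ℂ) : ℝ :=
  ‖Matrix.toEuclideanCLM (𝕜 := ℂ) A‖

open Complex

section ComplexBanachAlgebra

variable {𝔸 : Type*} [NormedRing 𝔸] [NormedAlgebra ℂ 𝔸] [CompleteSpace 𝔸]

theorem HasDerivAt.exp_smul_const (a : 𝔸) {f : ℝ → ℂ} {f' : ℂ} {s : ℝ}
    (hf : HasDerivAt f f' s) :
    HasDerivAt (fun u ↦ NormedSpace.exp (f u • a)) (f' • (NormedSpace.exp (f s • a) * a)) s :=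
  ((hasDerivAt_exp_smul_const a (f s)).hasFDerivAt.restrictScalars ℝ).comp_hasDerivAt s hf

theorem hasDerivAt_exp_mul_mul_exp (a b : 𝔸) (t s : ℝ) :
    HasDerivAt
      (fun u : ℝ ↦ NormedSpace.exp ((I * u) • a) * b * NormedSpace.exp ((I * (t - u)) • a))
      (NormedSpace.exp ((I * s) • a) * (I • (a * b - b * a)) *
        NormedSpace.exp ((I * (t - s)) • a)) s := by
  have hleft : HasDerivAt (fun u : ℝ ↦ I * u) I s := by
    simpa using (hasDerivAt_id s).ofReal_comp.const_mul I
  have hright : HasDerivAt (fun u : ℝ ↦ I * (t - u)) (-I) s := by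
    simpa using ((hasDerivAt_id s).ofReal_comp.const_sub (t : ℂ)).const_mul I
  have hcomm :
      a * NormedSpace.exp ((I * (t - s)) • a) = NormedSpace.exp ((I * (t - s)) • a) * a :=
    ((Commute.refl a).smul_right _).exp_right.eq
  convert ((hleft.exp_smul_const a).mul_const b).fun_mul (hright.exp_smul_const a) using 1
  rw [← hcomm]
  simp only [smul_mul_assoc, mul_smul_comm, neg_smul, mul_neg, smul_sub, mul_sub, sub_mul,
    mul_assoc]
  abel

end ComplexBanachAlgebra

section CStarAlgebra

variable {E : Type*} [CStarAlgebra E]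

lemma IsSelfAdjoint.exp_I_mul_smul_mem_unitary {a : E} (ha : IsSelfAdjoint a) (s : ℝ) :
    NormedSpace.exp ((I * s) • a) ∈ unitary E := by
  have hsa : IsSelfAdjoint ((s : ℂ) • a) := IsSelfAdjoint.smul (conj_ofReal s) ha
  simpa [mul_smul] using (selfAdjoint.expUnitary ⟨_, hsa⟩).prop

theorem IsSelfAdjoint.norm_exp_mul_sub_mul_exp_le {a : E} (ha : IsSelfAdjoint a) (b : E) (t : ℝ) :
    ‖NormedSpace.exp ((I * t) • a) * b - b * NormedSpace.exp ((I * t) • a)‖ ≤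
      |t| * ‖a * b - b * a‖ := by
  set g : ℝ → E := fun u ↦
    NormedSpace.exp ((I * u) • a) * b * NormedSpace.exp ((I * (t - u)) • a)
  have hderiv_norm (s : ℝ) : ‖NormedSpace.exp ((I * s) • a) * (I • (a * b - b * a)) *
      NormedSpace.exp ((I * (t - s)) • a)‖ = ‖a * b - b * a‖ := by
    rw [← ofReal_sub, CStarRing.norm_mul_mem_unitary _ (ha.exp_I_mul_smul_mem_unitary _),
      CStarRing.norm_mem_unitary_mul _ (ha.exp_I_mul_smul_mem_unitary _), norm_smul, norm_I,
      one_mul]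
  have hg0 : g 0 = b * NormedSpace.exp ((I * t) • a) := by simp [g]
  have hgt : g t = NormedSpace.exp ((I * t) • a) * b := by simp [g]
  calc _ = ‖g t - g 0‖ := by rw [hg0, hgt]
    _ ≤ ‖a * b - b * a‖ * ‖t - 0‖ :=
      convex_univ.norm_image_sub_le_of_norm_hasDerivWithin_le
        (fun s _ ↦ (hasDerivAt_exp_mul_mul_exp a b t s).hasDerivWithinAt)
        (fun s _ ↦ (hderiv_norm s).le) (Set.mem_univ 0) (Set.mem_univ t)
    _ = |t| * ‖a * b - b * a‖ := by rw [sub_zero, Real.norm_eq_abs, mul_comm]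

end CStarAlgebra

theorem stmt6 {n : ℕ} (A B : Matrix (Fin n) (Fin n) ℂ) (hA : A.IsHermitian) (t : ℝ) :
    opNorm (NormedSpace.exp ((Complex.I * t) • A) * B
        - B * NormedSpace.exp ((Complex.I * t) • A))
      ≤ |t| * opNorm (A * B - B * A) := by
  open scoped Matrix.Norms.L2Operator in
  exact IsSelfAdjoint.norm_exp_mul_sub_mul_exp_le hA B t
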